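/- arXiv:1504.04209 — 2 statements merged into one kernel-verified Lean document; each statement's English description precedes it below -/
import Mathlib

section
/- Let Y ⊆ ℂⁿ be a set whose 2(n−k)-dimensional Hausdorff measure is zero (0 ≤ k < n−1), and let X = {z ∈ ℂⁿ : z_{k+1} = ⋯ = z_n = 0}. Define q : ℂⁿ \ X → ℂP^{n-k-1} by q(z) = [z_{k+1} : ⋯ : z_n]. Then for almost every point p of ℂP^{n-k-1} (with respect to the (2(n-k)-2)-dimensional Hausdorff measure), the fiber q⁻¹(p) ∩ Y has 2-dimensional Hausdorff measure zero. -/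
/-!
In the affine chart `{w i ≠ 0}` of projective space, the lines `ℂ^* • w` met by `τ` are the
fibres of `z ↦ (τ z j / τ z i)_{j ≠ i}`, a map into a space of real dimension `2 (card ι - 1)`
that is Lipschitz on each piece of `Y` where `‖τ z i‖` is bounded below and `‖τ z‖` above.
Eilenberg's inequality `∫⁻ μH[s] (A ∩ f ⁻¹' {v}) ≲ L ^ m * μH[s + m] A`, for `f` `L`-Lipschitz
into an `m`-dimensional space, turns `μH[2 card ι] Y = 0` into: almost every such fibre has zero
`μH[2]`. The chart has null preimages (Fubini in the coordinate `w i`), so the same holds for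
almost every `w`.
-/

open MeasureTheory Metric Set Filter Topology Module
open scoped ENNReal NNReal

theorem addHaar_le_mul_ediam_pow {E : Type*} [NormedAddCommGroup E] [NormedSpace ℝ E]
    [FiniteDimensional ℝ E] [MeasurableSpace E] [BorelSpace E] (μ : Measure E)
    [μ.IsAddHaarMeasure] (s : Set E) :
    μ s ≤ μ (closedBall 0 1) * ediam s ^ finrank ℝ E := by
  rcases s.eq_empty_or_nonempty with rfl | ⟨x, hx⟩
  · simp
  by_cases hs : ediam s = ∞
  · have hE : finrank ℝ E ≠ 0 := fun h0 => by
      have : Subsingleton E := Module.finrank_zero_iff.mp h0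
      simp [ediam_subsingleton s.subsingleton_of_subsingleton] at hs
    rw [hs, ENNReal.top_pow hE, ENNReal.mul_top (measure_closedBall_pos μ 0 one_pos).ne']
    exact le_top
  calc μ s ≤ μ (closedBall x (ediam s).toReal) := measure_mono fun y hy => by
        rw [mem_closedBall, dist_edist]
        exact ENNReal.toReal_mono hs (edist_le_ediam_of_mem hy hx)
    _ = μ (closedBall 0 1) * ediam s ^ finrank ℝ E := by
        rw [Measure.addHaar_closedBall' μ x ENNReal.toReal_nonneg, ENNReal.ofReal_pow
          ENNReal.toReal_nonneg, ENNReal.ofReal_toReal hs, mul_comm]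

theorem exists_cover_tsum_ediam_rpow_lt {X : Type*} [EMetricSpace X] [MeasurableSpace X]
    [BorelSpace X] {d : ℝ} (hd : 0 < d) {A : Set X} (hA : μH[d] A = 0) {r ε : ℝ≥0∞}
    (hr : 0 < r) (hε : 0 < ε) :
    ∃ t : ℕ → Set X, A ⊆ ⋃ n, t n ∧ (∀ n, ediam (t n) ≤ r) ∧ ∑' n, ediam (t n) ^ d < ε := by
  have hlt : ⨅ (t : ℕ → Set X) (_ : A ⊆ ⋃ n, t n) (_ : ∀ n, ediam (t n) ≤ r),
      ∑' n, ⨆ _ : (t n).Nonempty, ediam (t n) ^ d < ε := by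
    refine lt_of_le_of_lt ?_ (hA ▸ hε)
    rw [Measure.hausdorffMeasure_apply]
    exact le_iSup₂ (f := fun r (_ : 0 < r) => ⨅ (t : ℕ → Set X) (_ : A ⊆ ⋃ n, t n)
      (_ : ∀ n, ediam (t n) ≤ r), ∑' n, ⨆ _ : (t n).Nonempty, ediam (t n) ^ d) r hr
  simp only [iInf_lt_iff] at hlt
  obtain ⟨t, hcover, hdiam, hsum⟩ := hlt
  refine ⟨t, hcover, hdiam, lt_of_le_of_lt (le_of_eq (tsum_congr fun n => ?_)) hsum⟩
  rcases (t n).eq_empty_or_nonempty with h | h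
  · simp [h, ENNReal.zero_rpow_of_pos hd]
  · rw [ciSup_pos h]

theorem hausdorffMeasure_inter_preimage_le_liminf {X E : Type*} [EMetricSpace X]
    [MeasurableSpace X] [BorelSpace X] [MeasurableSpace E] {μ : Measure E} {f : X → E}
    {A : Set X} {s : ℝ} (hs : 0 < s) {r : ℕ → ℝ≥0∞} (hr : Tendsto r atTop (𝓝 0))
    {t : ℕ → ℕ → Set X}
    (hcover : ∀ j, A ⊆ ⋃ n, t j n) (hdiam : ∀ j n, ediam (t j n) ≤ r j) (v : E) :
    μH[s] (A ∩ f ⁻¹' {v}) ≤ liminf (fun j => ∑' n,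
      (toMeasurable μ (f '' (t j n ∩ A))).indicator (fun _ => ediam (t j n) ^ s) v) atTop := by
  refine (Measure.hausdorffMeasure_le_liminf_tsum s _ r hr (fun j n => t j n ∩ (A ∩ f ⁻¹' {v}))
    (.of_forall fun j n => (ediam_mono inter_subset_left).trans (hdiam j n))
    (.of_forall fun j x hx => ?_)).trans (liminf_le_liminf (.of_forall fun j =>
      ENNReal.tsum_le_tsum fun n => ?_))
  · obtain ⟨n, hn⟩ := mem_iUnion.mp (hcover j hx.1)
    exact mem_iUnion.mpr ⟨n, hn, hx⟩
  · rcases (t j n ∩ (A ∩ f ⁻¹' {v})).eq_empty_or_nonempty with h | ⟨x, hxt, hxA, hxv⟩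
    · simp [h, ENNReal.zero_rpow_of_pos hs]
    · have hv : v ∈ toMeasurable μ (f '' (t j n ∩ A)) :=
        subset_toMeasurable _ _ ⟨x, ⟨hxt, hxA⟩, hxv⟩
      rw [indicator_of_mem hv]
      exact ENNReal.rpow_le_rpow (ediam_mono inter_subset_left) hs.le

section Eilenberg

variable {X : Type*} [MetricSpace X]
  {E : Type*} [NormedAddCommGroup E] [NormedSpace ℝ E] [FiniteDimensional ℝ E]
  [MeasurableSpace E] [BorelSpace E] {μ : Measure E} [μ.IsAddHaarMeasure]
  {f : X → E} {A : Set X} {s : ℝ}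

theorem lintegral_tsum_indicator_image_le {L : ℝ≥0} (hf : LipschitzOnWith L f A) (hs : 0 ≤ s)
    (t : ℕ → Set X) :
    ∫⁻ v, ∑' n, (toMeasurable μ (f '' (t n ∩ A))).indicator (fun _ => ediam (t n) ^ s) v ∂μ ≤
      μ (closedBall 0 1) * L ^ finrank ℝ E * ∑' n, ediam (t n) ^ (s + finrank ℝ E) := by
  rw [lintegral_tsum fun n => (measurable_const.indicator
    (measurableSet_toMeasurable _ _)).aemeasurable, ← ENNReal.tsum_mul_left]
  refine ENNReal.tsum_le_tsum fun n => ?_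
  have hdiam : ediam (f '' (t n ∩ A)) ≤ L * ediam (t n) := by
    simpa using hf.holderOnWith.ediam_image_inter_le (t n)
  rw [lintegral_indicator_const (measurableSet_toMeasurable _ _), measure_toMeasurable,
    ENNReal.rpow_add_of_nonneg _ _ hs (Nat.cast_nonneg _), ENNReal.rpow_natCast]
  calc ediam (t n) ^ s * μ (f '' (t n ∩ A))
      ≤ ediam (t n) ^ s * (μ (closedBall 0 1) * (L * ediam (t n)) ^ finrank ℝ E) := by
        gcongr
        exact (addHaar_le_mul_ediam_pow μ _).trans (by gcongr)
    _ = _ := by ring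

/-- Eilenberg's inequality for a null set: a cover `t` of `A` with small `∑ ediam (t n) ^ (s + m)`
gives, fibrewise, covers of `A ∩ f ⁻¹' {v}` whose `s`-sums have small integral in `v`; conclude by
Fatou's lemma. -/
theorem ae_hausdorffMeasure_inter_preimage_singleton_eq_zero [MeasurableSpace X] [BorelSpace X]
    (hs : 0 < s) {L : ℝ≥0} (hf : LipschitzOnWith L f A) (hA : μH[s + finrank ℝ E] A = 0) :
    ∀ᵐ v ∂μ, μH[s] (A ∩ f ⁻¹' {v}) = 0 := by
  set r : ℕ → ℝ≥0∞ := fun j => ((j + 1 : ℕ) : ℝ≥0∞)⁻¹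
  have hr : Tendsto r atTop (𝓝 0) :=
    ENNReal.tendsto_inv_nat_nhds_zero.comp (tendsto_add_atTop_nat 1)
  have hr0 : ∀ j, 0 < r j := fun j => ENNReal.inv_pos.2 (ENNReal.natCast_ne_top _)
  choose t hcover hdiam hsum using fun j =>
    exists_cover_tsum_ediam_rpow_lt (by positivity) hA (hr0 j) (hr0 j)
  set g : ℕ → E → ℝ≥0∞ := fun j v => ∑' n,
    (toMeasurable μ (f '' (t j n ∩ A))).indicator (fun _ => ediam (t j n) ^ s) v
  have hg : ∀ j, Measurable (g j) := fun j => Measurable.tsum fun n =>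
    measurable_const.indicator (measurableSet_toMeasurable _ _)
  set C : ℝ≥0∞ := μ (closedBall 0 1) * L ^ finrank ℝ E
  have hC : C ≠ ∞ := ENNReal.mul_ne_top measure_closedBall_lt_top.ne (by simp)
  have hint : ∫⁻ v, liminf (fun j => g j v) atTop ∂μ = 0 := by
    refine nonpos_iff_eq_zero.mp ?_
    calc ∫⁻ v, liminf (fun j => g j v) atTop ∂μ ≤ liminf (fun j => ∫⁻ v, g j v ∂μ) atTop :=
          lintegral_liminf_le hg
      _ ≤ liminf (fun j => C * r j) atTop := liminf_le_liminf (.of_forall fun j =>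
          (lintegral_tsum_indicator_image_le hf hs.le (t j)).trans (by gcongr; exact (hsum j).le))
      _ = 0 := by simpa using (ENNReal.Tendsto.const_mul hr (.inr hC)).liminf_eq
  filter_upwards [(lintegral_eq_zero_iff (Measurable.liminf hg)).mp hint] with v hv
  exact nonpos_iff_eq_zero.mp
    ((hausdorffMeasure_inter_preimage_le_liminf hs hr hcover hdiam v).trans_eq hv)

end Eilenberg

section AffineChart

variable {ι : Type*}

noncomputable def affineChart (i : ι) (w : ι → ℂ) : {j // j ≠ i} → ℂ := fun j => w j / w i

theorem ne_zero_and_exists_smul_iff_affineChart_eq {i : ι} {u w : ι → ℂ} (hw : w i ≠ 0) :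
    (u ≠ 0 ∧ ∃ t : ℂ, t ≠ 0 ∧ u = t • w) ↔ (u i ≠ 0 ∧ affineChart i u = affineChart i w) := by
  constructor
  · rintro ⟨-, t, ht, rfl⟩
    exact ⟨mul_ne_zero ht hw, funext fun j => mul_div_mul_left _ _ ht⟩
  · rintro ⟨hu, hchart⟩
    refine ⟨fun h => hu (congrFun h i), u i / w i, div_ne_zero hu hw, funext fun j => ?_⟩
    by_cases hj : j = i
    · subst hj
      simp [hw]
    · have := congrFun hchart ⟨j, hj⟩
      simp only [affineChart, div_eq_div_iff hu hw] at this
      simp only [Pi.smul_apply, smul_eq_mul]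
      field_simp
      linear_combination this

variable [Fintype ι] [DecidableEq ι]

theorem lipschitzOnWith_affineChart (i : ι) {δ b : ℝ≥0} (hδ : 0 < δ) :
    LipschitzOnWith (2 * b / δ ^ 2) (affineChart i) {w | δ ≤ ‖w i‖₊ ∧ ‖w‖₊ ≤ b} := by
  refine LipschitzOnWith.of_dist_le_mul fun w hw w' hw' =>
    (dist_pi_le_iff (by positivity)).2 fun j => ?_
  obtain ⟨hwi, -⟩ := hw
  obtain ⟨hw'i, hw'b⟩ := hw'
  rw [← NNReal.coe_le_coe, coe_nnnorm] at hwi hw'i hw'b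
  have hδ' : (0 : ℝ) < δ := hδ
  have hwi0 : w i ≠ 0 := norm_pos_iff.1 (hδ'.trans_le hwi)
  have hw'i0 : w' i ≠ 0 := norm_pos_iff.1 (hδ'.trans_le hw'i)
  have hnum : ‖(w j - w' j) * w' i + w' j * (w' i - w i)‖ ≤ 2 * b * dist w w' := by
    have h1 : ‖w j - w' j‖ ≤ dist w w' := by
      rw [← dist_eq_norm]; exact dist_le_pi_dist w w' j
    have h2 : ‖w' i - w i‖ ≤ dist w w' := by
      rw [← dist_eq_norm, dist_comm]; exact dist_le_pi_dist w w' i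
    have h3 : ‖w' i‖ ≤ b := (norm_le_pi_norm (f := w') i).trans hw'b
    have h4 : ‖w' j‖ ≤ b := (norm_le_pi_norm (f := w') j).trans hw'b
    calc _ ≤ ‖w j - w' j‖ * ‖w' i‖ + ‖w' j‖ * ‖w' i - w i‖ := by
          simpa only [norm_mul] using norm_add_le ((w j - w' j) * w' i) (w' j * (w' i - w i))
      _ ≤ dist w w' * b + b * dist w w' := by gcongr
      _ = 2 * b * dist w w' := by ring
  calc dist (w j / w i) (w' j / w' i)
      = ‖(w j - w' j) * w' i + w' j * (w' i - w i)‖ / (‖w i‖ * ‖w' i‖) := by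
        rw [dist_eq_norm, div_sub_div _ _ hwi0 hw'i0, norm_div, norm_mul]
        congr 2
        ring
    _ ≤ 2 * b * dist w w' / (δ * δ) := by gcongr
    _ = ((2 * b / δ ^ 2 : ℝ≥0) : ℝ) * dist w w' := by push_cast; field_simp

theorem volume_setOf_affineChart_mem_eq_zero (i : ι) {N : Set ({j // j ≠ i} → ℂ)}
    (hN : volume N = 0) : volume {w : ι → ℂ | w i ≠ 0 ∧ affineChart i w ∈ N} = 0 := by
  set N' := toMeasurable volume N
  refine measure_mono_null (t := {w : ι → ℂ | w i ≠ 0 ∧ affineChart i w ∈ N'})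
    (fun w hw => ⟨hw.1, subset_toMeasurable volume N hw.2⟩) ?_
  have hN' : volume N' = 0 := by rwa [measure_toMeasurable]
  set e := MeasurableEquiv.piEquivPiSubtypeProd (fun _ : ι => ℂ) (· = i)
  set T : Set (({j // j = i} → ℂ) × ({j // j ≠ i} → ℂ)) :=
    {p | p.1 ⟨i, rfl⟩ ≠ 0 ∧ (fun j => p.2 j / p.1 ⟨i, rfl⟩) ∈ N'}
  have hT : MeasurableSet T := by
    refine ((measurable_pi_apply _).comp measurable_fst
      (measurableSet_singleton 0).compl).inter (measurableSet_toMeasurable _ _ |>.preimage ?_)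
    exact measurable_pi_lambda _ fun j => ((measurable_pi_apply j).comp measurable_snd).div
      ((measurable_pi_apply _).comp measurable_fst)
  have hslice : ∀ a : {j // j = i} → ℂ, volume (Prod.mk a ⁻¹' T) = 0 := by
    intro a
    by_cases ha : a ⟨i, rfl⟩ = 0
    · simp [T, ha]
    let g := ((LinearEquiv.smulOfNeZero ℂ ({j // j ≠ i} → ℂ) _ (inv_ne_zero ha)).restrictScalars
      ℝ).toLinearMap
    have : Prod.mk a ⁻¹' T = g ⁻¹' N' := by
      ext u
      simp only [T, g, mem_preimage, mem_ofPred_eq, ne_eq, ha, not_false_eq_true, true_and,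
        LinearEquiv.restrictScalars_toLinearMap, LinearMap.coe_restrictScalars,
        LinearEquiv.coe_coe, LinearEquiv.smulOfNeZero_apply, div_eq_inv_mul]
      rfl
    rw [this, Measure.addHaar_preimage_linearMap _ (LinearEquiv.isUnit_det' _).ne_zero, hN',
      mul_zero]
  change volume (e ⁻¹' T) = 0
  rw [(volume_preserving_piEquivPiSubtypeProd (fun _ : ι => ℂ) (· = i)).measure_preimage
    hT.nullMeasurableSet, Measure.volume_eq_prod, Measure.measure_prod_null hT]
  exact .of_forall hslice

theorem ae_hausdorffMeasure_inter_affineChart_fiber_eq_zero {X : Type*} [MetricSpace X]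
    [MeasurableSpace X] [BorelSpace X] {τ : X → ι → ℂ} {K : ℝ≥0} (hτ : LipschitzWith K τ)
    {Y : Set X} (hY : μH[2 * Fintype.card ι] Y = 0) (i : ι) :
    ∀ᵐ v ∂(volume : Measure ({j // j ≠ i} → ℂ)),
      μH[2] (Y ∩ {z | τ z i ≠ 0} ∩ (affineChart i ∘ τ) ⁻¹' {v}) = 0 := by
  set S : ℕ → ℕ → Set X := fun a b => Y ∩ τ ⁻¹' {w | 1 / (a + 1) ≤ ‖w i‖₊ ∧ ‖w‖₊ ≤ b}
  have hdim : (2 : ℝ) + finrank ℝ ({j // j ≠ i} → ℂ) = 2 * Fintype.card ι := by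
    have : 1 ≤ Fintype.card ι := Fintype.card_pos_iff.2 ⟨i⟩
    simp [Module.finrank_pi_fintype, Complex.finrank_real_complex, Fintype.card_subtype_compl,
      Nat.cast_sub this]
    ring
  have hS : ∀ a b, ∀ᵐ v ∂(volume : Measure ({j // j ≠ i} → ℂ)),
      μH[2] (S a b ∩ (affineChart i ∘ τ) ⁻¹' {v}) = 0 := fun a b =>
    ae_hausdorffMeasure_inter_preimage_singleton_eq_zero two_pos
      ((lipschitzOnWith_affineChart i (by positivity)).comp hτ.lipschitzOnWith fun _ hz => hz.2)
      (hdim ▸ measure_mono_null inter_subset_left hY)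
  filter_upwards [ae_all_iff.2 fun a => ae_all_iff.2 (hS a)] with v hv
  refine measure_mono_null ?_ (measure_iUnion_null fun a => measure_iUnion_null (hv a))
  rintro z ⟨⟨hzY, hzi⟩, hzv⟩
  obtain ⟨a, ha⟩ := exists_nat_one_div_lt (nnnorm_pos.2 hzi)
  obtain ⟨b, hb⟩ := exists_nat_ge ‖τ z‖₊
  exact mem_iUnion₂.2 ⟨a, b, ⟨hzY, ha.le, hb⟩, hzv⟩

theorem ae_hausdorffMeasure_inter_preimage_line_eq_zero {X : Type*} [MetricSpace X]
    [MeasurableSpace X] [BorelSpace X] {τ : X → ι → ℂ} {K : ℝ≥0} (hτ : LipschitzWith K τ)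
    {Y : Set X} (hY : μH[2 * Fintype.card ι] Y = 0) :
    ∀ᵐ w ∂(volume : Measure (ι → ℂ)),
      μH[2] (Y ∩ {z | τ z ≠ 0 ∧ ∃ t : ℂ, t ≠ 0 ∧ τ z = t • w}) = 0 := by
  have hN := fun i => ae_iff.1 (ae_hausdorffMeasure_inter_affineChart_fiber_eq_zero hτ hY i)
  rw [ae_iff]
  refine measure_mono_null (fun w hw => ?_)
    (measure_iUnion_null fun i => volume_setOf_affineChart_mem_eq_zero i (hN i))
  obtain ⟨i, hi⟩ : ∃ i, w i ≠ 0 := by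
    by_contra! h
    refine hw (measure_mono_null (fun z ⟨_, hz0, t, _, hzt⟩ => hz0 ?_) measure_empty)
    simp [hzt, show w = 0 from funext h]
  refine mem_iUnion.2 ⟨i, hi, fun hgood => hw ?_⟩
  have hline : {z | τ z ≠ 0 ∧ ∃ t : ℂ, t ≠ 0 ∧ τ z = t • w} =
      {z | τ z i ≠ 0} ∩ (affineChart i ∘ τ) ⁻¹' {affineChart i w} := by
    ext z
    exact ne_zero_and_exists_smul_iff_affineChart_eq hi
  rw [hline, ← inter_assoc]
  exact hgood

end AffineChart

theorem stmt13 (n k : ℕ) (hk : k + 1 < n) (Y : Set (Fin n → ℂ))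
    (hY : μH[(2 * (n - k : ℝ))] Y = 0) :
    ∀ᵐ w ∂(volume : Measure (Fin (n - k) → ℂ)),
      μH[(2 : ℝ)]
        (Y ∩ {z : Fin n → ℂ |
          (fun j : Fin (n - k) => z (Fin.cast (by omega) (j.addNat k))) ≠ 0 ∧
          ∃ t : ℂ, t ≠ 0 ∧
            (fun j : Fin (n - k) => z (Fin.cast (by omega) (j.addNat k))) = t • w}) = 0 := by
  have hτ : LipschitzWith 1 fun (z : Fin n → ℂ) (j : Fin (n - k)) =>
      z (Fin.cast (by omega) (j.addNat k)) :=
    LipschitzWith.of_edist_le fun z z' => edist_pi_le_iff.2 fun j => edist_le_pi_edist z z' _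
  have hdim : 2 * (Fintype.card (Fin (n - k)) : ℝ) = 2 * (n - k : ℝ) := by
    rw [Fintype.card_fin, Nat.cast_sub (by omega)]
  exact ae_hausdorffMeasure_inter_preimage_line_eq_zero hτ (hdim ▸ hY)
end

section
/- There exists a constant C₁ > 0 such that for every a ∈ ℂ with 0 < |a| < 1/6 and every holomorphic function h on the open unit disc Δ ⊂ ℂ satisfying h(0) = 0 and h(a) = 1, one has ∫_{Δ_{1/2}} |h|² dλ > C₁ · |a|^{-2}, where Δ_{1/2} is the disc of radius 1/2 and λ is planar Lebesgue measure. -/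
/-!
Since `h 0 = 0`, the function `g = dslope h 0`, equal to `h z / z` off the origin, is holomorphic
with `g a = h a / a`. Cauchy's formula for `g ^ 2` at `a` on the circle `‖z‖ = r > ‖a‖` bounds
`‖h a‖ ^ 2 / ‖a‖ ^ 2` by `r / (r - ‖a‖)` times the circle average of `‖h‖ ^ 2 / r ^ 2`; so the
circle average of `‖h‖ ^ 2` is at least `r (r - ‖a‖) ‖h a‖ ^ 2 / ‖a‖ ^ 2`, a bound that is trivial
for `r ≤ ‖a‖`. Integrating it in polar coordinates over `0 < r < 1/2` gives
`∫_{‖z‖ < 1/2} ‖h‖ ^ 2 ≥ 2π (1/64 - ‖a‖/24) ‖h a‖ ^ 2 / ‖a‖ ^ 2`, and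
`2π (1/64 - 1/144) = 5π/288`.
-/

open MeasureTheory Metric Set Real Complex

theorem DiffContOnCl.sub_mul_norm_le_mul_circleAverage_norm {E : Type*} [NormedAddCommGroup E]
    [NormedSpace ℂ E] [CompleteSpace E] {f : ℂ → E} {c a : ℂ} {r : ℝ}
    (hf : DiffContOnCl ℂ f (ball c r)) (ha : a ∈ ball c r) :
    (r - ‖a - c‖) * ‖f a‖ ≤ r * Real.circleAverage (‖f ·‖) c r := by
  have hr : 0 < r := pos_of_mem_ball ha
  have hd : 0 < r - ‖a - c‖ := sub_pos.2 (mem_ball_iff_norm.1 ha)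
  have hfc : Continuous fun θ ↦ f (circleMap c r θ) :=
    (closure_ball c hr.ne' ▸ hf.continuousOn).comp_continuous (continuous_circleMap c r)
      (circleMap_mem_closedBall c hr.le)
  have hbound : ∀ θ, ‖deriv (circleMap c r) θ • (circleMap c r θ - a)⁻¹ • f (circleMap c r θ)‖
      ≤ r / (r - ‖a - c‖) * ‖f (circleMap c r θ)‖ := by
    intro θ
    have hdist : r - ‖a - c‖ ≤ ‖circleMap c r θ - a‖ := by
      have := norm_sub_norm_le (circleMap c r θ - c) (a - c)
      rwa [sub_sub_sub_cancel_right, circleMap_sub_center, norm_circleMap_zero, abs_of_pos hr]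
        at this
    rw [norm_smul, norm_smul, deriv_circleMap, norm_mul, norm_circleMap_zero, abs_of_pos hr,
      norm_I, mul_one, norm_inv, ← mul_assoc, div_eq_mul_inv]
    gcongr
  have hcauchy : ‖f a‖ * (2 * π) ≤
      r / (r - ‖a - c‖) * ∫ θ in (0)..(2 * π), ‖f (circleMap c r θ)‖ :=
    calc ‖f a‖ * (2 * π) = ‖∮ z in C(c, r), (z - a)⁻¹ • f z‖ := by
          rw [hf.circleIntegral_sub_inv_smul ha, norm_smul, mul_comm]
          simp [abs_of_pos pi_pos]
      _ ≤ ∫ θ in (0)..(2 * π), r / (r - ‖a - c‖) * ‖f (circleMap c r θ)‖ :=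
          intervalIntegral.norm_integral_le_of_norm_le two_pi_pos.le
            (Filter.Eventually.of_forall fun θ _ ↦ hbound θ)
            ((continuous_const.mul hfc.norm).intervalIntegrable _ _)
      _ = _ := intervalIntegral.integral_const_mul _ _
  rw [circleAverage_def, smul_eq_mul, mul_left_comm, le_inv_mul_iff₀ two_pi_pos]
  rw [div_mul_eq_mul_div, le_div_iff₀ hd] at hcauchy
  linarith

theorem mul_sub_mul_norm_sq_le_circleAverage_of_map_zero {h : ℂ → ℂ} {a : ℂ} {r : ℝ}
    (hh : DifferentiableOn ℂ h (closedBall 0 r)) (h0 : h 0 = 0) (ha0 : a ≠ 0) (ha : ‖a‖ < r) :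
    r * (r - ‖a‖) * ‖h a‖ ^ 2 ≤ ‖a‖ ^ 2 * circleAverage (fun z ↦ ‖h z‖ ^ 2) 0 r := by
  have hr : 0 < r := (norm_nonneg a).trans_lt ha
  have hg : DifferentiableOn ℂ (dslope h 0) (closedBall 0 r) :=
    (differentiableOn_dslope (closedBall_mem_nhds 0 hr)).2 hh
  have hnorm : ∀ z ≠ 0, ‖dslope h 0 z ^ 2‖ = ‖h z‖ ^ 2 / ‖z‖ ^ 2 := fun z hz ↦ by
    rw [dslope_of_ne _ hz, slope_def_field, h0, sub_zero, sub_zero, norm_pow, norm_div, div_pow]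
  have hcircle : circleAverage (‖dslope h 0 · ^ 2‖) 0 r =
      (r ^ 2)⁻¹ * circleAverage (fun z ↦ ‖h z‖ ^ 2) 0 r := by
    rw [← smul_eq_mul, ← circleAverage_fun_smul]
    refine circleAverage_congr_sphere fun z hz ↦ ?_
    rw [mem_sphere_zero_iff_norm, abs_of_pos hr] at hz
    rw [hnorm z (ne_zero_of_norm_ne_zero (hz ▸ hr.ne')), hz, smul_eq_mul, div_eq_inv_mul]
  have hcauchy := ((hg.pow 2).diffContOnCl_ball subset_rfl).sub_mul_norm_le_mul_circleAverage_norm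
    (mem_ball_zero_iff.2 ha)
  simp only [sub_zero, Pi.pow_apply, hnorm a ha0, hcircle] at hcauchy
  set A := circleAverage (fun z ↦ ‖h z‖ ^ 2) 0 r
  rw [show r * ((r ^ 2)⁻¹ * A) = A / r by field_simp, mul_div_assoc',
    div_le_div_iff₀ (by positivity) hr] at hcauchy
  linarith

theorem Complex.polarCoord_symm_eq_circleMap (p : ℝ × ℝ) :
    Complex.polarCoord.symm p = circleMap 0 p.1 p.2 := by
  rw [Complex.polarCoord_symm_apply, circleMap_zero, Complex.exp_mul_I, Complex.ofReal_cos,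
    Complex.ofReal_sin]

theorem integral_Ioo_neg_pi_pi_comp_circleMap {E : Type*} [NormedAddCommGroup E]
    [NormedSpace ℝ E] (f : ℂ → E) (r : ℝ) :
    ∫ θ in Ioo (-π) π, f (circleMap 0 r θ) = ∫ θ in (0)..(2 * π), f (circleMap 0 r θ) := by
  have hper : Function.Periodic (fun θ ↦ f (circleMap 0 r θ)) (2 * π) := fun θ ↦ by
    simp only [periodic_circleMap 0 r θ]
  rw [← integral_Ioc_eq_integral_Ioo, ← intervalIntegral.integral_of_le (by linarith [pi_pos]),
    ← zero_add (2 * π), ← hper.intervalIntegral_add_eq (-π) 0]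
  ring_nf

theorem integral_ball_eq_integral_circleAverage {E : Type*} [NormedAddCommGroup E]
    [NormedSpace ℝ E] {f : ℂ → E} {R : ℝ} (hR : 0 ≤ R) (hf : ContinuousOn f (closedBall 0 R)) :
    ∫ z in ball 0 R, f z = ∫ r in (0)..R, (2 * π * r) • circleAverage f 0 r := by
  set c : ℝ × ℝ → ℂ := fun p ↦ circleMap 0 p.1 p.2
  set g : ℝ × ℝ → E := fun p ↦ p.1 • f (c p)
  have hpolar : polarCoord.target ∩ c ⁻¹' ball 0 R = Ioo 0 R ×ˢ Ioo (-π) π := by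
    ext ⟨r, θ⟩
    simp only [polarCoord_target, mem_inter_iff, mem_prod, mem_Ioi, mem_preimage,
      mem_ball_zero_iff, norm_circleMap_zero, mem_Ioo, c]
    constructor
    · rintro ⟨⟨hr, hθ⟩, hrR⟩
      exact ⟨⟨hr, abs_of_pos hr ▸ hrR⟩, hθ⟩
    · rintro ⟨⟨hr, hrR⟩, hθ⟩
      exact ⟨⟨hr, hθ⟩, (abs_of_pos hr).symm ▸ hrR⟩
  have hg : IntegrableOn g (Ioo 0 R ×ˢ Ioo (-π) π) := by
    refine (ContinuousOn.integrableOn_compact (isCompact_Icc.prod isCompact_Icc) ?_).mono_set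
      (prod_mono Ioo_subset_Icc_self Ioo_subset_Icc_self)
    refine continuousOn_fst.smul (hf.comp (by fun_prop) fun p hp ↦ ?_)
    rw [mem_closedBall_zero_iff, norm_circleMap_zero, abs_of_nonneg hp.1.1]
    exact hp.1.2
  calc ∫ z in ball 0 R, f z
      = ∫ p in polarCoord.target, (c ⁻¹' ball 0 R).indicator g p := by
        rw [← integral_indicator measurableSet_ball, ← Complex.integral_comp_polarCoord_symm]
        simp only [Complex.polarCoord_symm_eq_circleMap, g, indicator_smul_apply]
        rfl
    _ = ∫ p in Ioo 0 R ×ˢ Ioo (-π) π, g p := by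
        rw [setIntegral_indicator (measurableSet_ball.preimage (by fun_prop)), hpolar]
    _ = ∫ r in Ioo 0 R, ∫ θ in Ioo (-π) π, g (r, θ) := by
        rw [Measure.volume_eq_prod] at hg ⊢
        exact setIntegral_prod g hg
    _ = ∫ r in (0)..R, (2 * π * r) • circleAverage f 0 r := by
        simp only [g, c, integral_smul, integral_Ioo_neg_pi_pi_comp_circleMap, circleAverage_def,
          smul_smul]
        rw [intervalIntegral.integral_of_le hR, integral_Ioc_eq_integral_Ioo]
        refine setIntegral_congr_fun measurableSet_Ioo fun r _ ↦ ?_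
        field_simp

theorem two_pi_mul_norm_sq_mul_le_integral_ball_of_map_zero {h : ℂ → ℂ} {a : ℂ} {R : ℝ}
    (hR : 0 ≤ R) (hh : DifferentiableOn ℂ h (closedBall 0 R)) (h0 : h 0 = 0) (ha0 : a ≠ 0) :
    2 * π * ‖h a‖ ^ 2 * (R ^ 4 / 4 - ‖a‖ * R ^ 3 / 3) ≤
      ‖a‖ ^ 2 * ∫ z in ball 0 R, ‖h z‖ ^ 2 := by
  have hF : ContinuousOn (fun z ↦ ‖h z‖ ^ 2) (closedBall 0 R) := hh.continuousOn.norm.pow 2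
  have havg : ContinuousOn (circleAverage (fun z ↦ ‖h z‖ ^ 2) 0) (Icc 0 R) :=
    (hF.mono fun z hz ↦ by simpa using hz.2).circleAverage fun _ hr ↦ hr.1
  have hpoint : ∀ r ∈ Icc 0 R, 2 * π * ‖h a‖ ^ 2 * (r ^ 3 - ‖a‖ * r ^ 2) ≤
      ‖a‖ ^ 2 * ((2 * π * r) * circleAverage (fun z ↦ ‖h z‖ ^ 2) 0 r) := by
    rintro r ⟨hr0, hrR⟩
    have hA : 0 ≤ circleAverage (fun z ↦ ‖h z‖ ^ 2) 0 r :=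
      circleAverage_nonneg_of_nonneg fun _ _ ↦ by positivity
    rcases le_or_gt r ‖a‖ with hra | hra
    · calc 2 * π * ‖h a‖ ^ 2 * (r ^ 3 - ‖a‖ * r ^ 2)
          = 2 * π * ‖h a‖ ^ 2 * r ^ 2 * (r - ‖a‖) := by ring
        _ ≤ 0 := mul_nonpos_of_nonneg_of_nonpos (by positivity) (by linarith)
        _ ≤ _ := by positivity
    · calc 2 * π * ‖h a‖ ^ 2 * (r ^ 3 - ‖a‖ * r ^ 2)
          = 2 * π * r * (r * (r - ‖a‖) * ‖h a‖ ^ 2) := by ring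
        _ ≤ 2 * π * r * (‖a‖ ^ 2 * circleAverage (fun z ↦ ‖h z‖ ^ 2) 0 r) :=
            mul_le_mul_of_nonneg_left (mul_sub_mul_norm_sq_le_circleAverage_of_map_zero
              (hh.mono (closedBall_subset_closedBall hrR)) h0 ha0 hra) (by positivity)
        _ = _ := by ring
  rw [integral_ball_eq_integral_circleAverage hR hF, ← intervalIntegral.integral_const_mul]
  calc 2 * π * ‖h a‖ ^ 2 * (R ^ 4 / 4 - ‖a‖ * R ^ 3 / 3)
      = ∫ r in (0)..R, 2 * π * ‖h a‖ ^ 2 * (r ^ 3 - ‖a‖ * r ^ 2) := by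
        rw [intervalIntegral.integral_const_mul, intervalIntegral.integral_sub
          (intervalIntegral.intervalIntegrable_pow 3)
          ((intervalIntegral.intervalIntegrable_pow 2).const_mul _),
          intervalIntegral.integral_const_mul, integral_pow, integral_pow]
        ring
    _ ≤ _ := intervalIntegral.integral_mono_on hR
        (Continuous.intervalIntegrable (by fun_prop) _ _)
        ((continuousOn_const.mul ((continuousOn_const.mul continuousOn_id).smul havg))
          |>.intervalIntegrable_of_Icc hR) hpoint

theorem stmt14 :
    ∃ C₁ : ℝ, 0 < C₁ ∧
      ∀ a : ℂ, 0 < ‖a‖ → ‖a‖ < 1 / 6 →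
        ∀ h : ℂ → ℂ, DifferentiableOn ℂ h (Metric.ball 0 1) → h 0 = 0 → h a = 1 →
          C₁ / ‖a‖ ^ 2 < ∫ z in Metric.ball (0 : ℂ) (1 / 2), ‖h z‖ ^ 2 := by
  refine ⟨5 * π / 288, by positivity, fun a ha0 ha6 h hh h0 ha ↦ ?_⟩
  have key := two_pi_mul_norm_sq_mul_le_integral_ball_of_map_zero (R := 1 / 2) (by norm_num)
    (hh.mono (closedBall_subset_ball (by norm_num))) h0 (norm_pos_iff.1 ha0)
  rw [ha, norm_one] at key
  rw [div_lt_iff₀' (by positivity)]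
  nlinarith [mul_pos pi_pos (sub_pos.2 ha6)]
end
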